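/- arXiv:1508.01977 — 5 statements merged into one kernel-verified Lean document; each statement's English description precedes it below -/
import Mathlib

section
/- Let x, y be distinct points in the interior of K, and let p, q ∈ K be points such that p, x, y, q lie on a common line in this order with x ≠ p and y ≠ q (i.e., x is in the open segment (p, y) and y is in the open segment (x, q)). Then the cross-ratio quantity σ(x, y) = (|x−y|·|p−q|)/(|p−x|·|q−y|), where |·| denotes the Euclidean norm of the difference, satisfies σ(x, y) ≥ (1/√m)·‖x − y‖ₓ. -/
open Matrix Real

/-- The closed polytope K = {x : aᵢᵀx ≥ bᵢ for all i}. -/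
def polyK {n m : ℕ} (a : Fin m → Fin n → ℝ) (b : Fin m → ℝ) : Set (Fin n → ℝ) :=
  {x | ∀ i, b i ≤ a i ⬝ᵥ x}

/-- Interior of the polytope K. -/
def intK {n m : ℕ} (a : Fin m → Fin n → ℝ) (b : Fin m → ℝ) : Set (Fin n → ℝ) :=
  {x | ∀ i, b i < a i ⬝ᵥ x}

/-- Hessian of the log-barrier: H(x) = ∑ᵢ aᵢaᵢᵀ/(aᵢᵀx − bᵢ)². -/
noncomputable def Hmat {n m : ℕ} (a : Fin m → Fin n → ℝ) (b : Fin m → ℝ)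
    (x : Fin n → ℝ) : Matrix (Fin n) (Fin n) ℝ :=
  ∑ i, ((a i ⬝ᵥ x - b i) ^ 2)⁻¹ • vecMulVec (a i) (a i)

/-- Local norm at x: ‖v‖ₓ = √(vᵀ H(x) v). -/
noncomputable def localNorm {n m : ℕ} (a : Fin m → Fin n → ℝ) (b : Fin m → ℝ)
    (x v : Fin n → ℝ) : ℝ :=
  Real.sqrt (v ⬝ᵥ (Hmat a b x).mulVec v)

/-- Euclidean norm on ℝⁿ. -/
noncomputable def eNorm {n : ℕ} (v : Fin n → ℝ) : ℝ :=
  Real.sqrt (∑ i, (v i) ^ 2)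

/-! Write `p - x = s • (x - y)` and `q - y = t • (y - x)` with `s, t > 0`; then the cross ratio is
`(s + 1 + t) / (s * t) = 1/s + 1/t + 1/(s * t)`. For each facet, with slack `g = aᵢ ⬝ᵥ x - bᵢ > 0` and
`c = aᵢ ⬝ᵥ (x - y)`, the constraints at `p` and `q` give `-g / s ≤ c ≤ g / (1 + t)`, so `|c| / g` is at
most the cross ratio, and `‖x - y‖ₓ²` is a sum of `m` such squares. -/

lemma exists_sub_eq_smul_of_mem_openSegment {E : Type*} [AddCommGroup E] [Module ℝ E] {p x y : E}
    (h : x ∈ openSegment ℝ p y) : ∃ s : ℝ, 0 < s ∧ p - x = s • (x - y) := by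
  obtain ⟨α, β, hα, hβ, hαβ, rfl⟩ := h
  obtain rfl : β = 1 - α := by linarith
  refine ⟨(1 - α) / α, div_pos hβ hα, ?_⟩
  rw [show α • p + (1 - α) • y - y = α • (p - y) by module, smul_smul, div_mul_cancel₀ _ hα.ne']
  module

lemma crossRatio_eq {E : Type*} [NormedAddCommGroup E] [NormedSpace ℝ E] {x y p q : E} {s t : ℝ}
    (hs : 0 < s) (ht : 0 < t) (hxy : x ≠ y) (hp : p - x = s • (x - y)) (hq : q - y = t • (y - x)) :
    ‖x - y‖ * ‖p - q‖ / (‖p - x‖ * ‖q - y‖) = (s + 1 + t) / (s * t) := by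
  have hpq : p - q = (s + 1 + t) • (x - y) := by
    rw [show p - q = (p - x) + (x - y) - (q - y) by abel, hp, hq]
    module
  have hd : ‖x - y‖ ≠ 0 := norm_ne_zero_iff.mpr (sub_ne_zero.mpr hxy)
  rw [hpq, hp, hq, norm_smul, norm_smul, norm_smul, norm_sub_rev y x, Real.norm_of_nonneg hs.le,
    Real.norm_of_nonneg ht.le, Real.norm_of_nonneg (by positivity)]
  field_simp

lemma abs_div_le_of_nonneg_add_of_nonneg_sub {g c s t : ℝ} (hg : 0 < g) (hs : 0 < s) (ht : 0 < t)
    (hp : 0 ≤ g + s * c) (hq : 0 ≤ g - (1 + t) * c) : |c / g| ≤ (s + 1 + t) / (s * t) := by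
  rw [abs_div, abs_of_pos hg, div_le_div_iff₀ hg (by positivity), ← abs_of_pos (mul_pos hs ht),
    ← abs_mul, abs_le]
  constructor <;> nlinarith [mul_pos hs ht, mul_pos hs hg, mul_pos ht hg]

lemma abs_dotProduct_div_slack_le {n : ℕ} {a x y p q : Fin n → ℝ} {b s t : ℝ} (hx : b < a ⬝ᵥ x)
    (hp : b ≤ a ⬝ᵥ p) (hq : b ≤ a ⬝ᵥ q) (hs : 0 < s) (ht : 0 < t)
    (hps : p - x = s • (x - y)) (hqt : q - y = t • (y - x)) :
    |a ⬝ᵥ (x - y) / (a ⬝ᵥ x - b)| ≤ (s + 1 + t) / (s * t) := by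
  have hap := congrArg (a ⬝ᵥ ·) hps
  have haq := congrArg (a ⬝ᵥ ·) hqt
  simp only [dotProduct_sub, dotProduct_smul, smul_eq_mul] at hap haq
  refine abs_div_le_of_nonneg_add_of_nonneg_sub (sub_pos.mpr hx) hs ht ?_ ?_ <;>
    rw [dotProduct_sub] <;> linarith

lemma dotProduct_Hmat_mulVec {n m : ℕ} (a : Fin m → Fin n → ℝ) (b : Fin m → ℝ) (x v : Fin n → ℝ) :
    v ⬝ᵥ Hmat a b x *ᵥ v = ∑ i, (a i ⬝ᵥ v / (a i ⬝ᵥ x - b i)) ^ 2 := by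
  simp only [Hmat, sum_mulVec, dotProduct_sum, smul_mulVec, dotProduct_smul, vecMulVec_mulVec,
    MulOpposite.smul_eq_mul_unop, MulOpposite.unop_op, smul_eq_mul, dotProduct_comm v (a _), ← sq]
  exact Finset.sum_congr rfl fun i _ => by rw [div_pow, div_eq_inv_mul]

lemma localNorm_le_sqrt_mul {n m : ℕ} (a : Fin m → Fin n → ℝ) (b : Fin m → ℝ) (x v : Fin n → ℝ)
    {σ : ℝ} (hσ : 0 ≤ σ) (h : ∀ i, |a i ⬝ᵥ v / (a i ⬝ᵥ x - b i)| ≤ σ) :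
    localNorm a b x v ≤ √m * σ := by
  rw [localNorm, dotProduct_Hmat_mulVec, ← Real.sqrt_sq hσ, ← Real.sqrt_mul m.cast_nonneg]
  gcongr
  calc ∑ i, (a i ⬝ᵥ v / (a i ⬝ᵥ x - b i)) ^ 2 ≤ ∑ _i : Fin m, σ ^ 2 :=
        Finset.sum_le_sum fun i _ => sq_le_sq' (abs_le.mp (h i)).1 (abs_le.mp (h i)).2
    _ = m * σ ^ 2 := by simp

lemma eNorm_eq_norm_toLp {n : ℕ} (v : Fin n → ℝ) :
    eNorm v = ‖(WithLp.toLp 2 v : EuclideanSpace ℝ (Fin n))‖ := by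
  simp [eNorm, EuclideanSpace.norm_eq]

theorem hilbert_vs_local_norm_general {n m : ℕ}
    (a : Fin m → Fin n → ℝ) (b : Fin m → ℝ)
    (x y p q : Fin n → ℝ)
    (hx : x ∈ intK a b)
    (hp : p ∈ polyK a b) (hq : q ∈ polyK a b)
    (hxy : x ≠ y)
    (hxseg : x ∈ openSegment ℝ p y) (hyseg : y ∈ openSegment ℝ x q) :
    (eNorm (x - y) * eNorm (p - q)) / (eNorm (p - x) * eNorm (q - y)) ≥
      (1 / Real.sqrt m) * localNorm a b x (x - y) := by
  obtain ⟨s, hs, hps⟩ := exists_sub_eq_smul_of_mem_openSegment hxseg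
  obtain ⟨t, ht, hqt⟩ := exists_sub_eq_smul_of_mem_openSegment (openSegment_symm ℝ x q ▸ hyseg)
  have hσ : 0 ≤ (s + 1 + t) / (s * t) := by positivity
  have hcross := crossRatio_eq (x := WithLp.toLp 2 x) (y := WithLp.toLp 2 y)
    (p := WithLp.toLp 2 p) (q := WithLp.toLp 2 q) hs ht (by simpa using hxy)
    (by simpa using congrArg (WithLp.toLp 2) hps) (by simpa using congrArg (WithLp.toLp 2) hqt)
  simp only [eNorm_eq_norm_toLp, WithLp.toLp_sub]
  rw [hcross, ge_iff_le, one_div]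
  refine inv_mul_le_of_le_mul₀ (Real.sqrt_nonneg _) hσ (localNorm_le_sqrt_mul a b x _ hσ fun i => ?_)
  exact abs_dotProduct_div_slack_le (hx i) (hp i) (hq i) hs ht hps hqt

theorem hilbert_vs_local_norm {n m : ℕ} (hn : 1 ≤ n)
    (a : Fin m → Fin n → ℝ) (b : Fin m → ℝ)
    (hbdd : Bornology.IsBounded (polyK a b))
    (x y p q : Fin n → ℝ)
    (hx : x ∈ intK a b) (hy : y ∈ intK a b)
    (hp : p ∈ polyK a b) (hq : q ∈ polyK a b)
    (hxy : x ≠ y) (hxp : x ≠ p) (hyq : y ≠ q)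
    (hxseg : x ∈ openSegment ℝ p y) (hyseg : y ∈ openSegment ℝ x q) :
    (eNorm (x - y) * eNorm (p - q)) / (eNorm (p - x) * eNorm (q - y)) ≥
      (1 / Real.sqrt m) * localNorm a b x (x - y) :=
  hilbert_vs_local_norm_general a b x y p q hx hp hq hxy hxseg hyseg
end

section
/- Let b₁, …, b_m ∈ ℝⁿ satisfy ∑_{i=1}^m bᵢbᵢᵀ = Iₙ, and let g ∼ N(0, Iₙ) be a standard Gaussian vector on ℝⁿ. Then E[ ( ∑_{i=1}^m (bᵢᵀg)³ )² ] ≤ 15n. -/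
/-!
Write `u`, `v` for two of the vectors `bᵢ`. Splitting `v = t • u + w` with `w ⊥ u`, the Gaussian
variables `⟪u, g⟫` and `⟪w, g⟫` are uncorrelated, hence independent, so `E[⟪u, g⟫³ ⟪v, g⟫³]`
expands into products of one-dimensional Gaussian moments and equals
`9 ‖u‖² ‖v‖² ⟪u, v⟫ + 6 ⟪u, v⟫³`. Isotropy says `x = ∑ ⟪bᵢ, x⟫ bᵢ` for every `x`; hence
`‖bᵢ‖ ≤ 1`, `∑ ‖bᵢ‖² = n` and `∑ⱼ ⟪bᵢ, bⱼ⟫² = ‖bᵢ‖²`, which bounds the cubic terms by `n`.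
The mixed terms add up to `‖∑ ‖bᵢ‖² bᵢ‖²`, and `a ↦ ∑ aᵢ bᵢ` is a contraction, so they are at
most `∑ ‖bᵢ‖⁴ ≤ n`. Altogether the second moment is at most `9n + 6n = 15n`.
-/

open Matrix MeasureTheory ProbabilityTheory

/-- The standard Gaussian measure N(0, Iₙ) on ℝⁿ. -/
noncomputable def stdGauss (n : ℕ) : Measure (Fin n → ℝ) :=
  Measure.pi fun _ => gaussianReal 0 1

open Real WithLp
open scoped NNReal Nat RealInnerProductSpace

lemma integral_pow_gaussianReal_of_odd {k : ℕ} (hk : Odd k) (v : ℝ≥0) :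
    ∫ x, x ^ k ∂gaussianReal 0 v = 0 := by
  have h : ∫ x, x ^ k ∂gaussianReal 0 v = ∫ x, (-x) ^ k ∂gaussianReal 0 v := by
    conv_lhs => rw [← neg_zero, ← gaussianReal_map_neg]
    rw [integral_map (by fun_prop) (by fun_prop)]
  rw [funext fun x : ℝ ↦ hk.neg_pow x, integral_neg] at h
  linarith

lemma integral_pow_gaussianReal_eq_sqrt_pow_mul (v : ℝ≥0) (k : ℕ) :
    ∫ x, x ^ k ∂gaussianReal 0 v = √v ^ k * ∫ x, x ^ k ∂gaussianReal 0 1 := by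
  have hv : gaussianReal 0 v = (gaussianReal 0 1).map (√v * ·) := by
    rw [gaussianReal_map_const_mul, mul_zero, mul_one]
    congr
    ext
    simp
  rw [hv, integral_map (by fun_prop) (by fun_prop), ← integral_const_mul]
  simp only [mul_pow]

lemma integral_pow_two_mul_gaussianReal_zero_one (j : ℕ) :
    ∫ x, x ^ (2 * j) ∂gaussianReal 0 1 = (2 * j - 1 : ℕ)‼ := by
  have hhalf : ∫ x in Set.Ioi (0 : ℝ), x ^ (2 * j) * exp (-(1 / 2) * x ^ 2)
      = 2 ^ j * √2 * (1 / 2) * Gamma (j + 1 / 2) := by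
    have h := integral_rpow_mul_exp_neg_mul_rpow (p := 2) (q := 2 * j) (b := 1 / 2)
      two_pos (by have := j.cast_nonneg (α := ℝ); linarith) (by norm_num)
    have hpow : (1 / 2 : ℝ) ^ (-(2 * j + 1 : ℝ) / 2) = 2 ^ j * √2 := by
      rw [one_div, inv_rpow two_pos.le, ← rpow_neg two_pos.le,
        show -(-(2 * j + 1 : ℝ) / 2) = j + 1 / 2 by ring, rpow_add two_pos, rpow_natCast,
        sqrt_eq_rpow]
    rw [hpow, show (2 * j + 1 : ℝ) / 2 = j + 1 / 2 by ring] at h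
    rw [← h]
    refine setIntegral_congr_fun measurableSet_Ioi fun x _ ↦ ?_
    rw [rpow_two, ← rpow_natCast]
    push_cast
    rfl
  rw [integral_gaussianReal_eq_integral_smul one_ne_zero]
  have heven : (fun x : ℝ ↦ gaussianPDFReal 0 1 x • x ^ (2 * j))
      = fun x ↦ (√(2 * π))⁻¹ * (|x| ^ (2 * j) * exp (-(1 / 2) * |x| ^ 2)) := by
    ext x
    rw [gaussianPDFReal_def, (even_two_mul j).pow_abs, sq_abs]
    simp only [NNReal.coe_one, mul_one, sub_zero, smul_eq_mul]
    ring_nf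
  rw [heven, integral_const_mul,
    integral_comp_abs (f := fun x ↦ x ^ (2 * j) * exp (-(1 / 2) * x ^ 2)), hhalf,
    Gamma_nat_add_half, sqrt_mul zero_le_two]
  field_simp

lemma integral_pow_gaussianReal (v : ℝ≥0) (k : ℕ) :
    ∫ x, x ^ k ∂gaussianReal 0 v = if Even k then (v : ℝ) ^ (k / 2) * (k - 1 : ℕ)‼ else 0 := by
  split_ifs with hk
  · obtain ⟨j, rfl⟩ := hk
    rw [← two_mul, integral_pow_gaussianReal_eq_sqrt_pow_mul,
      integral_pow_two_mul_gaussianReal_zero_one, pow_mul, sq_sqrt v.coe_nonneg,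
      Nat.mul_div_cancel_left j two_pos]
  · exact integral_pow_gaussianReal_of_odd (Nat.not_even_iff_odd.mp hk) v

section StdGaussian

variable {E : Type*} [NormedAddCommGroup E] [InnerProductSpace ℝ E] [FiniteDimensional ℝ E]
  [MeasurableSpace E] [BorelSpace E]

lemma map_inner_stdGaussian (u : E) :
    (stdGaussian E).map (⟪u, ·⟫) = gaussianReal 0 (‖u‖₊ ^ 2) := by
  have h : HasGaussianLaw (⟪u, ·⟫) (stdGaussian E) :=
    IsGaussian.hasGaussianLaw_id.map_fun (innerSL ℝ u)
  rw [h.map_eq_gaussianReal]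
  congr
  · exact integral_strongDual_stdGaussian (innerSL ℝ u)
  · ext
    simp only [Real.coe_toNNReal _ (variance_nonneg _ _), NNReal.coe_pow, coe_nnnorm]
    exact (variance_dual_stdGaussian (innerSL ℝ u)).trans (by rw [innerSL_apply_norm])

lemma indepFun_inner_stdGaussian {u w : E} (h : ⟪u, w⟫ = 0) :
    IndepFun (⟪u, ·⟫) (⟪w, ·⟫) (stdGaussian E) := by
  have hlaw : HasGaussianLaw (fun x ↦ (⟪u, x⟫, ⟪w, x⟫)) (stdGaussian E) :=
    IsGaussian.hasGaussianLaw_id.map_fun ((innerSL ℝ u).prod (innerSL ℝ w))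
  refine hlaw.indepFun_of_covariance_eq_zero ?_
  rw [← covarianceBilin_apply_eq_cov IsGaussian.memLp_two_id, covarianceBilin_stdGaussian,
    innerSL_apply_apply, h]

lemma integrable_inner_pow_mul_inner_pow (u v : E) (a b : ℕ) :
    Integrable (fun x ↦ ⟪u, x⟫ ^ a * ⟪v, x⟫ ^ b) (stdGaussian E) := by
  have hnorm : Integrable (fun x : E ↦ ‖x‖ ^ (a + b)) (stdGaussian E) :=
    (IsGaussian.memLp_id _ (a + b : ℕ) (by simp)).integrable_norm_pow'
  refine (hnorm.const_mul (‖u‖ ^ a * ‖v‖ ^ b)).mono' (by fun_prop) (.of_forall fun x ↦ ?_)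
  rw [norm_mul, norm_pow, norm_pow, pow_add]
  calc ‖⟪u, x⟫‖ ^ a * ‖⟪v, x⟫‖ ^ b ≤ (‖u‖ * ‖x‖) ^ a * (‖v‖ * ‖x‖) ^ b := by
        gcongr <;> exact norm_inner_le_norm _ _
    _ = _ := by ring

lemma integral_inner_pow_mul_inner_pow_of_inner_eq_zero {u w : E} (h : ⟪u, w⟫ = 0) (a b : ℕ) :
    ∫ x, ⟪u, x⟫ ^ a * ⟪w, x⟫ ^ b ∂stdGaussian E
      = (∫ y, y ^ a ∂gaussianReal 0 (‖u‖₊ ^ 2)) * ∫ y, y ^ b ∂gaussianReal 0 (‖w‖₊ ^ 2) := by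
  rw [(indepFun_inner_stdGaussian h).integral_fun_comp_mul_comp (f := (· ^ a)) (g := (· ^ b))
    (by fun_prop) (by fun_prop) (by fun_prop) (by fun_prop),
    ← map_inner_stdGaussian, ← map_inner_stdGaussian, integral_map (by fun_prop) (by fun_prop),
    integral_map (by fun_prop) (by fun_prop)]

lemma integral_inner_pow_three_mul_add_pow_three_of_inner_eq_zero {u w : E} (h : ⟪u, w⟫ = 0)
    (t : ℝ) :
    ∫ x, ⟪u, x⟫ ^ 3 * (t * ⟪u, x⟫ + ⟪w, x⟫) ^ 3 ∂stdGaussian E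
      = 15 * t ^ 3 * ‖u‖ ^ 6 + 9 * t * ‖u‖ ^ 4 * ‖w‖ ^ 2 := by
  have hexpand : ∀ x, ⟪u, x⟫ ^ 3 * (t * ⟪u, x⟫ + ⟪w, x⟫) ^ 3
      = ∑ k ∈ Finset.range 4, (3 : ℕ).choose k * t ^ k * (⟪u, x⟫ ^ (k + 3) * ⟪w, x⟫ ^ (3 - k)) := by
    intro x
    rw [add_pow, Finset.mul_sum]
    exact Finset.sum_congr rfl fun k _ ↦ by ring
  simp_rw [hexpand]
  rw [integral_finsetSum _ fun k _ ↦ (integrable_inner_pow_mul_inner_pow u w _ _).const_mul _]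
  simp only [integral_const_mul, integral_inner_pow_mul_inner_pow_of_inner_eq_zero h,
    Finset.sum_range_succ, Finset.sum_range_zero, integral_pow_gaussianReal]
  norm_num [Nat.doubleFactorial]
  ring

lemma integral_inner_pow_three_mul_inner_pow_three (u v : E) :
    ∫ x, ⟪u, x⟫ ^ 3 * ⟪v, x⟫ ^ 3 ∂stdGaussian E
      = 9 * ‖u‖ ^ 2 * ‖v‖ ^ 2 * ⟪u, v⟫ + 6 * ⟪u, v⟫ ^ 3 := by
  rcases eq_or_ne u 0 with rfl | hu
  · simp
  have hu2 : ‖u‖ ^ 2 ≠ 0 := by positivity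
  set t := ⟪u, v⟫ / ‖u‖ ^ 2
  set w := v - t • u
  have hw : ⟪u, w⟫ = 0 := by
    simp only [w, t, inner_sub_right, inner_smul_right, real_inner_self_eq_norm_sq]
    field_simp
    ring
  have hnorm_w : ‖w‖ ^ 2 = ‖v‖ ^ 2 - t * ⟪u, v⟫ := by
    rw [← real_inner_self_eq_norm_sq, ← real_inner_self_eq_norm_sq]
    simp only [w, t, inner_sub_left, inner_smul_left, inner_sub_right, inner_smul_right,
      real_inner_comm u v, RCLike.conj_to_real, real_inner_self_eq_norm_sq]
    field_simp
    ring
  have hv : ∀ x, ⟪v, x⟫ = t * ⟪u, x⟫ + ⟪w, x⟫ := fun x ↦ by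
    simp only [w, inner_sub_left, inner_smul_left, RCLike.conj_to_real]
    ring
  simp only [hv, integral_inner_pow_three_mul_add_pow_three_of_inner_eq_zero hw, hnorm_w, t]
  field_simp
  ring

lemma integral_sq_sum_inner_pow_three {ι : Type*} [Fintype ι] (u : ι → E) :
    ∫ x, (∑ i, ⟪u i, x⟫ ^ 3) ^ 2 ∂stdGaussian E
      = 9 * ∑ i, ∑ j, ‖u i‖ ^ 2 * ‖u j‖ ^ 2 * ⟪u i, u j⟫ + 6 * ∑ i, ∑ j, ⟪u i, u j⟫ ^ 3 := by
  simp_rw [sq (∑ i, _), Finset.sum_mul_sum]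
  rw [integral_finsetSum _ fun i _ ↦
    integrable_finsetSum _ fun j _ ↦ integrable_inner_pow_mul_inner_pow _ _ 3 3]
  simp only [integral_finsetSum _ fun j _ ↦ integrable_inner_pow_mul_inner_pow _ _ 3 3,
    integral_inner_pow_three_mul_inner_pow_three, Finset.mul_sum, ← Finset.sum_add_distrib]
  exact Finset.sum_congr rfl fun i _ ↦ Finset.sum_congr rfl fun j _ ↦ by ring

end StdGaussian

section ParsevalFrame

variable {ι E : Type*} [Fintype ι] [NormedAddCommGroup E] [InnerProductSpace ℝ E]
  {u : ι → E}

lemma sum_inner_mul_inner_of_parseval (hu : ∀ x, ∑ i, ⟪u i, x⟫ • u i = x) (x y : E) :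
    ∑ i, ⟪u i, x⟫ * ⟪u i, y⟫ = ⟪x, y⟫ := by
  conv_rhs => rw [← hu x]
  simp only [sum_inner, real_inner_smul_left]

lemma sum_norm_sq_of_parseval [FiniteDimensional ℝ E] (hu : ∀ x, ∑ i, ⟪u i, x⟫ • u i = x) :
    ∑ i, ‖u i‖ ^ 2 = Module.finrank ℝ E := by
  let e := stdOrthonormalBasis ℝ E
  calc ∑ i, ‖u i‖ ^ 2 = ∑ i, ∑ k, ⟪u i, e k⟫ ^ 2 := by
        simp only [e.sum_sq_inner_left]
    _ = ∑ k, ‖e k‖ ^ 2 := by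
        rw [Finset.sum_comm]
        simp only [sq, sum_inner_mul_inner_of_parseval hu, real_inner_self_eq_norm_mul_norm]
    _ = Module.finrank ℝ E := by simp [e.orthonormal.1]

lemma norm_le_one_of_parseval (hu : ∀ x, ∑ i, ⟪u i, x⟫ • u i = x) (i : ι) : ‖u i‖ ≤ 1 := by
  have h : ⟪u i, u i⟫ ^ 2 ≤ ∑ j, ⟪u j, u i⟫ ^ 2 :=
    Finset.single_le_sum (f := fun j ↦ ⟪u j, u i⟫ ^ 2) (fun j _ ↦ sq_nonneg _) (Finset.mem_univ i)
  simp only [sq, sum_inner_mul_inner_of_parseval hu, real_inner_self_eq_norm_mul_norm] at h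
  have h1 : ‖u i‖ * ‖u i‖ ≤ 1 := by nlinarith [mul_self_nonneg ‖u i‖]
  nlinarith [norm_nonneg (u i)]

lemma norm_sum_smul_sq_le_of_parseval (hu : ∀ x, ∑ i, ⟪u i, x⟫ • u i = x) (a : ι → ℝ) :
    ‖∑ i, a i • u i‖ ^ 2 ≤ ∑ i, a i ^ 2 := by
  set y := ∑ i, a i • u i
  have hy : ‖y‖ ^ 2 = ∑ i, a i * ⟪u i, y⟫ := by
    calc ‖y‖ ^ 2 = ⟪∑ i, a i • u i, y⟫ := (real_inner_self_eq_norm_sq y).symm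
      _ = _ := by simp only [sum_inner, real_inner_smul_left]
  have hcs := Finset.sum_mul_sq_le_sq_mul_sq Finset.univ a fun i ↦ ⟪u i, y⟫
  simp only [sq ⟪_, y⟫, sum_inner_mul_inner_of_parseval hu, real_inner_self_eq_norm_sq,
    ← hy] at hcs
  nlinarith [sq_nonneg ‖y‖, Finset.sum_nonneg fun i (_ : i ∈ Finset.univ) ↦ sq_nonneg (a i)]

lemma sum_sum_inner_pow_three_le_of_parseval [FiniteDimensional ℝ E]
    (hu : ∀ x, ∑ i, ⟪u i, x⟫ • u i = x) :
    ∑ i, ∑ j, ⟪u i, u j⟫ ^ 3 ≤ Module.finrank ℝ E := by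
  have hcube : ∀ i j, ⟪u i, u j⟫ ^ 3 ≤ ⟪u i, u j⟫ ^ 2 := by
    intro i j
    have h : |⟪u i, u j⟫| ≤ 1 := (abs_real_inner_le_norm _ _).trans
      (mul_le_one₀ (norm_le_one_of_parseval hu i) (norm_nonneg _) (norm_le_one_of_parseval hu j))
    nlinarith [abs_le.mp h, sq_nonneg ⟪u i, u j⟫]
  calc ∑ i, ∑ j, ⟪u i, u j⟫ ^ 3 ≤ ∑ i, ∑ j, ⟪u i, u j⟫ ^ 2 :=
        Finset.sum_le_sum fun i _ ↦ Finset.sum_le_sum fun j _ ↦ hcube i j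
    _ = ∑ j, ‖u j‖ ^ 2 := by
        rw [Finset.sum_comm]
        simp only [sq, sum_inner_mul_inner_of_parseval hu, real_inner_self_eq_norm_mul_norm]
    _ = Module.finrank ℝ E := sum_norm_sq_of_parseval hu

lemma sum_sum_norm_sq_mul_norm_sq_mul_inner_le_of_parseval [FiniteDimensional ℝ E]
    (hu : ∀ x, ∑ i, ⟪u i, x⟫ • u i = x) :
    ∑ i, ∑ j, ‖u i‖ ^ 2 * ‖u j‖ ^ 2 * ⟪u i, u j⟫ ≤ Module.finrank ℝ E := by
  calc ∑ i, ∑ j, ‖u i‖ ^ 2 * ‖u j‖ ^ 2 * ⟪u i, u j⟫ = ‖∑ i, ‖u i‖ ^ 2 • u i‖ ^ 2 := by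
        rw [← real_inner_self_eq_norm_sq, sum_inner]
        simp only [inner_sum, real_inner_smul_left, real_inner_smul_right]
        exact Finset.sum_congr rfl fun i _ ↦ Finset.sum_congr rfl fun j _ ↦ by ring
    _ ≤ ∑ i, (‖u i‖ ^ 2) ^ 2 := norm_sum_smul_sq_le_of_parseval hu _
    _ ≤ ∑ i, ‖u i‖ ^ 2 := by
        refine Finset.sum_le_sum fun i _ ↦ pow_le_of_le_one (by positivity) ?_ two_ne_zero
        exact pow_le_one₀ (norm_nonneg _) (norm_le_one_of_parseval hu i)
    _ = Module.finrank ℝ E := sum_norm_sq_of_parseval hu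

end ParsevalFrame

lemma inner_toLp_eq_dotProduct {κ : Type*} [Fintype κ] (v : κ → ℝ) (x : EuclideanSpace ℝ κ) :
    ⟪toLp 2 v, x⟫ = v ⬝ᵥ ofLp x :=
  dotProduct_comm _ _

lemma sum_inner_smul_toLp_of_sum_vecMulVec_eq_one {ι κ : Type*} [Fintype ι] [Fintype κ]
    [DecidableEq κ] {b : ι → κ → ℝ} (hb : ∑ i, vecMulVec (b i) (b i) = 1)
    (x : EuclideanSpace ℝ κ) : ∑ i, ⟪toLp 2 (b i), x⟫ • toLp 2 (b i) = x := by
  apply (WithLp.linearEquiv 2 ℝ (κ → ℝ)).injective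
  have h := congrArg (· *ᵥ ofLp x) hb
  simp only [sum_mulVec, vecMulVec_mulVec, one_mulVec, op_smul_eq_smul] at h
  simpa [inner_toLp_eq_dotProduct] using h

lemma integral_stdGauss_eq_integral_stdGaussian (n : ℕ) (f : (Fin n → ℝ) → ℝ) :
    ∫ g, f g ∂stdGauss n = ∫ x, f (ofLp x) ∂stdGaussian (EuclideanSpace ℝ (Fin n)) := by
  rw [← map_pi_eq_stdGaussian, ← MeasurableEquiv.coe_toLp,
    (MeasurableEquiv.toLp 2 (Fin n → ℝ)).measurableEmbedding.integral_map]
  rfl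

theorem second_moment_sum_cubes_le {n m : ℕ} (b : Fin m → Fin n → ℝ)
    (hb : ∑ i, vecMulVec (b i) (b i) = (1 : Matrix (Fin n) (Fin n) ℝ)) :
    ∫ g, (∑ i, (b i ⬝ᵥ g) ^ 3) ^ 2 ∂(stdGauss n) ≤ 15 * n := by
  set u : Fin m → EuclideanSpace ℝ (Fin n) := fun i ↦ toLp 2 (b i)
  have hu : ∀ x, ∑ i, ⟪u i, x⟫ • u i = x := sum_inner_smul_toLp_of_sum_vecMulVec_eq_one hb
  have hdot : ∀ i x, b i ⬝ᵥ ofLp x = ⟪u i, x⟫ := fun i x ↦ (inner_toLp_eq_dotProduct _ _).symm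
  have hmixed := sum_sum_norm_sq_mul_norm_sq_mul_inner_le_of_parseval hu
  have hcubes := sum_sum_inner_pow_three_le_of_parseval hu
  rw [finrank_euclideanSpace_fin] at hmixed hcubes
  rw [integral_stdGauss_eq_integral_stdGaussian]
  simp only [hdot, integral_sq_sum_inner_pow_three]
  linarith
end

section
/- Let x, y be points in the interior of K and let c ≥ 0. If ‖x − y‖ₓ ≤ c/√n, then for every i ∈ {1, …, m}: (1 − c/√n)·(aᵢᵀx − bᵢ) ≤ aᵢᵀy − bᵢ ≤ (1 + c/√n)·(aᵢᵀx − bᵢ). -/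
open Matrix MeasureTheory Real

lemma quadform_eq {n m : ℕ} (a : Fin m → Fin n → ℝ) (s : Fin m → ℝ) (v : Fin n → ℝ) :
    v ⬝ᵥ (∑ i, (s i)⁻¹ • vecMulVec (a i) (a i)).mulVec v
      = ∑ i, (s i)⁻¹ * (a i ⬝ᵥ v)^2 := by
  simp only [Matrix.mulVec, dotProduct, vecMulVec, Matrix.sum_apply, Matrix.smul_apply,
    Matrix.of_apply, smul_eq_mul, Finset.mul_sum, Finset.sum_mul]
  rw [Finset.sum_congr rfl (fun (j : Fin n) _ =>
    Finset.sum_comm (s := Finset.univ) (t := Finset.univ)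
      (f := fun (k : Fin n) (i : Fin m) => v j * ((s i)⁻¹ * (a i j * a i k) * v k)))]
  rw [Finset.sum_comm]
  refine Finset.sum_congr rfl fun i _ => ?_
  rw [pow_two, Finset.sum_mul, Finset.mul_sum]
  refine Finset.sum_congr rfl fun j _ => ?_
  rw [Finset.mul_sum, Finset.mul_sum]
  refine Finset.sum_congr rfl fun k _ => ?_
  ring

theorem closeness_of_slacks {n m : ℕ} (hn : 1 ≤ n)
    (a : Fin m → Fin n → ℝ) (b : Fin m → ℝ)
    (hbdd : Bornology.IsBounded {x : Fin n → ℝ | ∀ i, b i ≤ a i ⬝ᵥ x})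
    (x y : Fin n → ℝ) (hx : x ∈ intK a b) (hy : y ∈ intK a b)
    (c : ℝ) (hc : 0 ≤ c)
    (hxy : localNorm a b x (x - y) ≤ c / Real.sqrt n) :
    ∀ i, (1 - c / Real.sqrt n) * (a i ⬝ᵥ x - b i) ≤ a i ⬝ᵥ y - b i ∧
      a i ⬝ᵥ y - b i ≤ (1 + c / Real.sqrt n) * (a i ⬝ᵥ x - b i) := by
  intro i
  set t : ℝ := c / Real.sqrt n with ht
  have htn : 0 ≤ t := div_nonneg hc (Real.sqrt_nonneg _)
  set v : Fin n → ℝ := x - y with hv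
  have hQ : v ⬝ᵥ (Hmat a b x).mulVec v
      = ∑ j, (((a j ⬝ᵥ x - b j) ^ 2))⁻¹ * (a j ⬝ᵥ v)^2 :=
    quadform_eq a _ v
  have hsi : 0 < a i ⬝ᵥ x - b i := sub_pos.2 (hx i)
  have hterms : ∀ j ∈ Finset.univ, (0:ℝ) ≤ (((a j ⬝ᵥ x - b j) ^ 2))⁻¹ * (a j ⬝ᵥ v)^2 :=
    fun j _ => mul_nonneg (inv_nonneg.2 (sq_nonneg _)) (sq_nonneg _)
  have hQ0 : 0 ≤ v ⬝ᵥ (Hmat a b x).mulVec v := hQ ▸ Finset.sum_nonneg hterms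
  have hQle : v ⬝ᵥ (Hmat a b x).mulVec v ≤ t^2 := by
    have := Real.sqrt_le_sqrt (le_of_eq hQ.symm)
    calc v ⬝ᵥ (Hmat a b x).mulVec v = (Real.sqrt (v ⬝ᵥ (Hmat a b x).mulVec v))^2 :=
          (Real.sq_sqrt hQ0).symm
      _ ≤ t^2 := pow_le_pow_left₀ (Real.sqrt_nonneg _) hxy 2
  have hile : (((a i ⬝ᵥ x - b i) ^ 2))⁻¹ * (a i ⬝ᵥ v)^2 ≤ t^2 :=
    le_trans (Finset.single_le_sum hterms (Finset.mem_univ i)) (hQ ▸ hQle)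
  have hsq : (a i ⬝ᵥ v)^2 ≤ (t * (a i ⬝ᵥ x - b i))^2 := by
    rw [mul_pow]
    have h2 : (0:ℝ) < (a i ⬝ᵥ x - b i)^2 := pow_pos hsi 2
    calc (a i ⬝ᵥ v)^2 = ((((a i ⬝ᵥ x - b i) ^ 2))⁻¹ * (a i ⬝ᵥ v)^2) * (a i ⬝ᵥ x - b i)^2 := by
          field_simp
      _ ≤ t^2 * (a i ⬝ᵥ x - b i)^2 := by
          exact mul_le_mul_of_nonneg_right hile (le_of_lt h2)
  have habs : |a i ⬝ᵥ v| ≤ t * (a i ⬝ᵥ x - b i) := by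
    have := Real.sqrt_le_sqrt hsq
    rw [Real.sqrt_sq_eq_abs, Real.sqrt_sq (mul_nonneg htn hsi.le)] at this
    exact this
  have hdiff : a i ⬝ᵥ v = (a i ⬝ᵥ x - b i) - (a i ⬝ᵥ y - b i) := by
    simp [hv, dotProduct_sub]
  rw [hdiff] at habs
  rw [abs_le] at habs
  constructor <;> nlinarith [habs.1, habs.2]
end

section
/- Let b₁, …, b_m ∈ ℝⁿ satisfy ∑_{i=1}^m bᵢbᵢᵀ = Iₙ. Then ∑_{i=1}^m ∑_{j=1}^m (bᵢᵀbⱼ)³ ≤ n. -/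
open Matrix

theorem sum_inner_cubed_le {n m : ℕ} (b : Fin m → Fin n → ℝ)
    (hb : ∑ i, vecMulVec (b i) (b i) = (1 : Matrix (Fin n) (Fin n) ℝ)) :
    ∑ i, ∑ j, (b i ⬝ᵥ b j) ^ 3 ≤ (n : ℝ) := by
  have hE : ∀ k l, ∑ i, b i k * b i l = if k = l then (1:ℝ) else 0 := by
    intro k l
    have := congrFun (congrFun hb k) l
    simpa [vecMulVec_apply, Matrix.one_apply, Matrix.sum_apply] using this
  have key : ∀ j, ∑ i, (b i ⬝ᵥ b j)^2 = b j ⬝ᵥ b j := by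
    intro j
    calc ∑ i, (b i ⬝ᵥ b j)^2
        = ∑ k, ∑ l, (b j k * b j l) * ∑ i, b i k * b i l := by
          simp only [dotProduct, sq, Finset.sum_mul_sum]
          rw [Finset.sum_comm]
          refine Finset.sum_congr rfl fun k _ => ?_
          rw [Finset.sum_comm]
          refine Finset.sum_congr rfl fun l _ => ?_
          rw [Finset.mul_sum]
          exact Finset.sum_congr rfl fun i _ => by ring
      _ = b j ⬝ᵥ b j := by
          simp [hE, mul_ite, dotProduct]
  have hsq_le : ∀ i j, (b i ⬝ᵥ b j)^2 ≤ b j ⬝ᵥ b j := by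
    intro i j
    rw [← key j]
    exact Finset.single_le_sum (f := fun k => (b k ⬝ᵥ b j)^2) (fun k _ => sq_nonneg _) (Finset.mem_univ i)
  have hdiag : ∀ j, b j ⬝ᵥ b j ≤ 1 := by
    intro j
    have h1 := hsq_le j j
    have h0 : (0:ℝ) ≤ b j ⬝ᵥ b j := Finset.sum_nonneg fun k _ => mul_self_nonneg _
    nlinarith
  have hterm : ∀ i j, (b i ⬝ᵥ b j)^3 ≤ (b i ⬝ᵥ b j)^2 := by
    intro i j
    have h1 : (b i ⬝ᵥ b j)^2 ≤ 1 := le_trans (hsq_le i j) (hdiag j)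
    have hx : b i ⬝ᵥ b j ≤ 1 := by nlinarith
    nlinarith [mul_nonneg (sq_nonneg (b i ⬝ᵥ b j)) (sub_nonneg.2 hx)]
  have htr : ∑ j, b j ⬝ᵥ b j = (n : ℝ) := by
    simp only [dotProduct]
    rw [Finset.sum_comm]
    simp [hE]
  calc ∑ i, ∑ j, (b i ⬝ᵥ b j)^3
      ≤ ∑ i, ∑ j, (b i ⬝ᵥ b j)^2 :=
        Finset.sum_le_sum fun i _ => Finset.sum_le_sum fun j _ => hterm i j
    _ = ∑ j, ∑ i, (b i ⬝ᵥ b j)^2 := Finset.sum_comm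
    _ = ∑ j, b j ⬝ᵥ b j := Finset.sum_congr rfl fun j _ => key j
    _ = (n : ℝ) := htr
end

section
/- Let b₁, …, b_m ∈ ℝⁿ satisfy ∑_{i=1}^m bᵢbᵢᵀ = Iₙ. Then ‖ ∑_{i=1}^m ‖bᵢ‖²·bᵢ ‖² ≤ ∑_{i=1}^m ‖bᵢ‖⁴, where ‖·‖ denotes the Euclidean norm; equivalently, ∑_{i=1}^m ∑_{j=1}^m ‖bᵢ‖²·‖bⱼ‖²·(bᵢᵀbⱼ) ≤ ∑_{i=1}^m ‖bᵢ‖⁴. -/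
/-!
The vector `v = ∑ ‖bᵢ‖² bᵢ` is the image of the weights `aᵢ = ‖bᵢ‖²` under the synthesis operator
`a ↦ ∑ aᵢ bᵢ` of the isotropic system, and this operator has norm at most one: isotropy gives
`∑ (bᵢ ⬝ v)² = ‖v‖²`, while `‖v‖² = ∑ aᵢ (bᵢ ⬝ v)`, so expanding `0 ≤ ∑ (aᵢ - bᵢ ⬝ v)²`
yields `‖v‖² ≤ ∑ aᵢ²`. The double sum is `‖v‖²` written out.
-/

open Matrix

namespace Matrix

variable {ι n R : Type*} [Fintype ι] [Fintype n]

theorem sum_smul_dotProduct_sum_smul [CommSemiring R] (a : ι → R) (b : ι → n → R) :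
    (∑ i, a i • b i) ⬝ᵥ (∑ j, a j • b j) = ∑ i, ∑ j, a i * a j * (b i ⬝ᵥ b j) := by
  rw [sum_dotProduct]
  simp only [smul_dotProduct, dotProduct_sum, dotProduct_smul, smul_eq_mul]
  exact Finset.sum_congr rfl fun i _ => Finset.sum_congr rfl fun j _ => by ring

theorem sum_sq_dotProduct_of_sum_vecMulVec_eq_one [CommSemiring R] [DecidableEq n]
    {b : ι → n → R} (hb : ∑ i, vecMulVec (b i) (b i) = 1) (x : n → R) :
    ∑ i, (b i ⬝ᵥ x) ^ 2 = x ⬝ᵥ x := by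
  conv_rhs => enter [2]; rw [← one_mulVec x, ← hb]
  simp only [sum_mulVec, vecMulVec_mulVec, op_smul_eq_smul, dotProduct_sum, dotProduct_smul,
    smul_eq_mul, sq, dotProduct_comm (b _) x]

theorem dotProduct_self_sum_smul_le_sum_sq [CommRing R] [LinearOrder R] [IsStrictOrderedRing R]
    [DecidableEq n] {b : ι → n → R} (hb : ∑ i, vecMulVec (b i) (b i) = 1) (a : ι → R) :
    (∑ i, a i • b i) ⬝ᵥ (∑ i, a i • b i) ≤ ∑ i, a i ^ 2 := by
  set v := ∑ i, a i • b i
  have hv : v ⬝ᵥ v = ∑ i, a i * (b i ⬝ᵥ v) := by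
    simp only [v, sum_dotProduct, smul_dotProduct, smul_eq_mul]
  have hexpand : ∑ i, (a i - b i ⬝ᵥ v) ^ 2 = ∑ i, a i ^ 2 - v ⬝ᵥ v := by
    simp only [sub_sq, Finset.sum_add_distrib, Finset.sum_sub_distrib,
      sum_sq_dotProduct_of_sum_vecMulVec_eq_one hb, mul_assoc, ← Finset.mul_sum, ← hv]
    ring
  have hnonneg : 0 ≤ ∑ i, (a i - b i ⬝ᵥ v) ^ 2 := Finset.sum_nonneg fun i _ => sq_nonneg _
  linarith

end Matrix

theorem weighted_sum_inner_le {n m : ℕ} (b : Fin m → Fin n → ℝ)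
    (hb : ∑ i, vecMulVec (b i) (b i) = (1 : Matrix (Fin n) (Fin n) ℝ)) :
    (∑ i, (b i ⬝ᵥ b i) • b i) ⬝ᵥ (∑ i, (b i ⬝ᵥ b i) • b i) ≤
      ∑ i, (b i ⬝ᵥ b i) ^ 2 ∧
    ∑ i, ∑ j, (b i ⬝ᵥ b i) * (b j ⬝ᵥ b j) * (b i ⬝ᵥ b j) ≤
      ∑ i, (b i ⬝ᵥ b i) ^ 2 := by
  have h := dotProduct_self_sum_smul_le_sum_sq hb fun i => b i ⬝ᵥ b i
  exact ⟨h, sum_smul_dotProduct_sum_smul (fun i => b i ⬝ᵥ b i) b ▸ h⟩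
end
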